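/- In the component maintenance game on graph G with repair costs C_i = 1 − ε for all agents where 0 < ε < 1/n, if no vertex cover of G has size ≤ k and the total subsidy budget is at most k − 1, then for any allocation of this budget as repair subsidies, the all-zero profile or some profile in which the system is broken remains a pure Nash equilibrium; hence no subsidy scheme with total subsidy ≤ k − 1 guarantees the system functions in every Nash equilibrium. -/
import Mathlib


open scoped Classical
open Finset

def covers {V : Type*} (G : SimpleGraph V) (s : V → Bool) : Prop :=
  ∀ u v, G.Adj u v → (s u = true ∨ s v = true)

/-- Agent `i`'s subsidized cost with repair cost `1 - ε` and repair subsidy `σ i`. -/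
noncomputable def gcost {V : Type*} (G : SimpleGraph V) (ε : ℝ) (σ : V → ℝ)
    (i : V) (s : V → Bool) : ℝ :=
  ((1 - ε) - σ i) * (if s i then 1 else 0) + (if covers G s then 0 else 1)

def isNE {V : Type*} [DecidableEq V] (G : SimpleGraph V) (ε : ℝ) (σ : V → ℝ)
    (s : V → Bool) : Prop :=
  ∀ i, gcost G ε σ i s ≤ gcost G ε σ i (Function.update s i (!(s i)))

/-- If `G` has no vertex cover of size `≤ k`, repair costs are `1 - ε` with
`0 < ε < 1/n`, and the total subsidy is at most `k - 1`, then the subsidized game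
has a pure Nash equilibrium in which the system is broken: no such subsidy scheme
guarantees the system functions in every Nash equilibrium. -/
theorem stmt_13 {V : Type*} [Fintype V] [DecidableEq V] (G : SimpleGraph V)
    (n k : ℕ) (hn : Fintype.card V = n)
    (ε : ℝ) (hε0 : 0 < ε) (hε1 : ε < 1 / n)
    (σ : V → ℝ) (hσ : ∀ i, 0 ≤ σ i) (hbud : ∑ i : V, σ i ≤ (k : ℝ) - 1)
    (hcov : ∀ K : Finset V, (∀ u v, G.Adj u v → (u ∈ K ∨ v ∈ K)) → k < K.card) :
    ∃ s : V → Bool, isNE G ε σ s ∧ ¬ covers G s := by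

  classical
  have hn0 : 0 < n := by
    rcases Nat.eq_zero_or_pos n with h | h
    · exfalso; rw [h] at hε1; norm_num at hε1; linarith
    · exact h
  have hn0' : (0:ℝ) < n := by exact_mod_cast hn0
  have hεn : ε * n < 1 := by
    have := (lt_div_iff₀ hn0').mp hε1
    linarith
  have hε1' : ε < 1 := by
    have hn1 : (1:ℝ) ≤ n := by exact_mod_cast hn0
    nlinarith
  have hkn : k < n := by
    have := hcov Finset.univ (by intro u v _; left; exact Finset.mem_univ u)
    simpa [hn] using this
  set s : V → Bool := fun i => decide ((1 - ε) ≤ σ i) with hs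
  have hmem : ∀ i, s i = true ↔ (1 - ε) ≤ σ i := by
    intro i; simp [hs]
  set T : Finset V := Finset.univ.filter (fun i => (1 - ε) ≤ σ i) with hT
  have hmemT : ∀ i, i ∈ T ↔ s i = true := by
    intro i; rw [hmem]; simp [hT]
  have hcardT : (1 - ε) * T.card ≤ (k : ℝ) - 1 := by
    have h1 : (1 - ε) * T.card = ∑ _i ∈ T, (1 - ε) := by
      rw [Finset.sum_const, nsmul_eq_mul, mul_comm]
    have h2 : ∑ i ∈ T, (1 - ε) ≤ ∑ i ∈ T, σ i :=
      Finset.sum_le_sum (fun i hi => (Finset.mem_filter.mp hi).2)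
    have h3 : ∑ i ∈ T, σ i ≤ ∑ i : V, σ i :=
      Finset.sum_le_sum_of_subset_of_nonneg (Finset.subset_univ _) (fun i _ _ => hσ i)
    linarith
  have hTk : T.card < k := by
    by_contra h
    push_neg at h
    have hk : (k : ℝ) ≤ T.card := by exact_mod_cast h
    have hkr : (k : ℝ) < n := by exact_mod_cast hkn
    nlinarith [hcardT]
  have hnotcov : ¬ covers G s := by
    intro hc
    have := hcov T (by
      intro u v huv
      rcases hc u v huv with h' | h'
      · left; exact (hmemT u).mpr h'
      · right; exact (hmemT v).mpr h')
    omega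
  refine ⟨s, ?_, hnotcov⟩
  intro i
  by_cases hsi : s i = true
  · -- i repairs; deviating to not repairing keeps system broken
    have hσi : (1 - ε) ≤ σ i := (hmem i).mp hsi
    have hnotcov' : ¬ covers G (Function.update s i (!(s i))) := by
      intro hc'
      apply hnotcov
      intro u v huv
      rcases hc' u v huv with h' | h'
      · left
        by_cases hu : u = i
        · subst hu; rw [Function.update_self, hsi] at h'; simp at h'
        · rwa [Function.update_of_ne hu] at h'
      · right
        by_cases hv : v = i
        · subst hv; rw [Function.update_self, hsi] at h'; simp at h'
        · rwa [Function.update_of_ne hv] at h'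
    have hb : (!(s i)) = false := by rw [hsi]; rfl
    rw [hb] at hnotcov' ⊢
    have hupd : Function.update s i false i = false := Function.update_self _ _ _
    simp only [gcost, hsi, hupd, if_neg hnotcov, if_neg hnotcov']
    norm_num
    linarith
  · -- i does not repair; deviating to repairing does not fix the system
    have hsi' : s i = false := by
      cases h : s i
      · rfl
      · exact absurd h hsi
    have hσi : σ i < (1 - ε) := by
      by_contra h
      push_neg at h
      exact hsi ((hmem i).mpr h)
    have hnotcov' : ¬ covers G (Function.update s i (!(s i))) := by
      intro hc'
      have hK := hcov (insert i T) (by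
        intro u v huv
        rcases hc' u v huv with h' | h'
        · left
          by_cases hu : u = i
          · subst hu; exact Finset.mem_insert_self _ _
          · rw [Function.update_of_ne hu] at h'
            exact Finset.mem_insert_of_mem ((hmemT u).mpr h')
        · right
          by_cases hv : v = i
          · subst hv; exact Finset.mem_insert_self _ _
          · rw [Function.update_of_ne hv] at h'
            exact Finset.mem_insert_of_mem ((hmemT v).mpr h'))
      have := Finset.card_insert_le i T
      omega
    have hb : (!(s i)) = true := by rw [hsi']; rfl
    rw [hb] at hnotcov' ⊢
    have hupd : Function.update s i true i = true := Function.update_self _ _ _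
    simp only [gcost, hsi', hupd, if_neg hnotcov, if_neg hnotcov']
    norm_num
    linarith
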